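/- Let K ⊆ ℝⁿ, and for each k let Gᵏ : ℝⁿ → ℝⁿ be strongly monotone with the same modulus c > 0. Let (xᵏ) ⊆ K and (yᵏ) ⊆ K be sequences such that, for each k, yᵏ satisfies ⟨Gᵏ(yᵏ), w − yᵏ⟩ ≥ 0 for all w ∈ K. Suppose gapᵏ := ⟨Gᵏ(xᵏ), yᵏ − xᵏ⟩ → 0. Then ‖xᵏ − yᵏ‖ → 0. -/
import Mathlib


open RealInnerProductSpace

theorem stmt15 {n : ℕ} (K : Set (EuclideanSpace ℝ (Fin n)))
    (G : ℕ → EuclideanSpace ℝ (Fin n) → EuclideanSpace ℝ (Fin n))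
    (c : ℝ) (hc : 0 < c)
    (hmono : ∀ k, ∀ u v : EuclideanSpace ℝ (Fin n),
      c * ‖u - v‖ ^ 2 ≤ ⟪G k u - G k v, u - v⟫)
    (x y : ℕ → EuclideanSpace ℝ (Fin n))
    (hx : ∀ k, x k ∈ K) (hy : ∀ k, y k ∈ K)
    (hVI : ∀ k, ∀ w ∈ K, 0 ≤ ⟪G k (y k), w - y k⟫)
    (hgap : Filter.Tendsto (fun k => ⟪G k (x k), y k - x k⟫) Filter.atTop (nhds 0)) :
    Filter.Tendsto (fun k => ‖x k - y k‖) Filter.atTop (nhds 0) := by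
  have key : ∀ k, c * ‖x k - y k‖ ^ 2 ≤ -⟪G k (x k), y k - x k⟫ := by
    intro k
    have h1 := hmono k (x k) (y k)
    have h2 := hVI k (x k) (hx k)
    have hsplit : ⟪G k (x k) - G k (y k), x k - y k⟫
        = ⟪G k (x k), x k - y k⟫ - ⟪G k (y k), x k - y k⟫ := by
      rw [inner_sub_left]
    have hneg : ⟪G k (x k), x k - y k⟫ = -⟪G k (x k), y k - x k⟫ := by
      rw [← inner_neg_right]; congr 1; abel
    nlinarith [h1, h2, hsplit, hneg]
  have hsq : Filter.Tendsto (fun k => ‖x k - y k‖ ^ 2) Filter.atTop (nhds 0) := by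
    have hub : Filter.Tendsto (fun k => (-⟪G k (x k), y k - x k⟫) / c) Filter.atTop (nhds 0) := by
      have := (hgap.neg).div_const c
      simpa using this
    refine squeeze_zero (fun k => by positivity) (fun k => ?_) hub
    rw [le_div_iff₀ hc]
    linarith [key k]
  have := hsq.sqrt
  simp only [Real.sqrt_zero] at this
  refine this.congr fun k => ?_
  rw [Real.sqrt_sq (norm_nonneg _)]
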